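/- arXiv:1009.3454 — 10 statements merged into one kernel-verified Lean document; each statement's English description precedes it below -/
import Mathlib

section
/- Given a weak mixed distributive law (K, t, c, λ) in Cat, the natural transformation δ : c ⟶ cc is a 2-cell (c,λ) ⟶ (c,λ)(c,λ) in Mnd^ι(Cat); explicitly, the second diagram of (1.1) (weak comultiplication compatibility) holds: (δ ▷ t) ∘ λ = (cc ◁ μ) ∘ ((c λ)(λ c) applied to t) ∘ (t ◁ δ ▷ t) ∘ (t ◁ λ) ∘ (t ◁ η ▷ c), i.e. the composite tc → ct → cct equals tc → ttc → tct → tcct → ctct → cctt → cct. -/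
open CategoryTheory

universe v₁ u₁ v₂ u₂

variable {K : Type u₁} [Category.{v₁} K]

/-- A weak mixed distributive law `λ : tc ⟶ ct` between a monad `t` and a comonad `c`
on a category `K`, satisfying the four axioms of Böhm–Lack–Street, stated componentwise. -/
structure WeakMixedDistLaw (t : CategoryTheory.Monad K) (c : CategoryTheory.Comonad K) where
  l : (c.toFunctor ⋙ t.toFunctor) ⟶ (t.toFunctor ⋙ c.toFunctor)
  mul_compat : ∀ X : K, t.μ.app (c.obj X) ≫ l.app X =
    t.map (l.app X) ≫ l.app (t.obj X) ≫ c.map (t.μ.app X)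
  comul_compat : ∀ X : K, t.map (c.δ.app X) ≫ l.app (c.obj X) ≫ c.map (l.app X) =
    l.app X ≫ c.δ.app (t.obj X)
  weak_unit : ∀ X : K, t.η.app (c.obj X) ≫ l.app X =
    c.δ.app X ≫ c.map (t.η.app (c.obj X)) ≫ c.map (l.app X) ≫ c.map (c.ε.app (t.obj X))
  weak_counit : ∀ X : K, l.app X ≫ c.ε.app (t.obj X) =
    t.map (t.η.app (c.obj X)) ≫ t.map (l.app X) ≫ t.map (c.ε.app (t.obj X)) ≫ t.μ.app X

/-- For a weak mixed distributive law, δ is a 2-cell `(c,λ) ⟶ (c,λ)(c,λ)` in `Mnd^ι(Cat)`. -/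
theorem delta_is_two_cell_in_Mnd_iota (t : CategoryTheory.Monad K) (c : CategoryTheory.Comonad K)
    (W : WeakMixedDistLaw t c) :
    ∀ X : K,
      W.l.app X ≫ c.δ.app (t.obj X) =
      t.map (t.η.app (c.obj X)) ≫ t.map (W.l.app X) ≫ t.map (c.δ.app (t.obj X)) ≫
        W.l.app (c.obj (t.obj X)) ≫ c.map (W.l.app (t.obj X)) ≫ c.map (c.map (t.μ.app X)) := by
  intro X
  have h1 := W.comul_compat (t.obj X)
  have h2 := W.mul_compat X
  have hnat : c.δ.app (t.obj (t.obj X)) ≫ c.map (c.map (t.μ.app X)) =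
      c.map (t.μ.app X) ≫ c.δ.app (t.obj X) := by
    simp
  calc W.l.app X ≫ c.δ.app (t.obj X)
      = (t.map (t.η.app (c.obj X)) ≫ t.μ.app (c.obj X)) ≫ W.l.app X ≫ c.δ.app (t.obj X) := by
        simp
    _ = t.map (t.η.app (c.obj X)) ≫ (t.map (W.l.app X) ≫ W.l.app (t.obj X) ≫
          c.map (t.μ.app X)) ≫ c.δ.app (t.obj X) := by
        rw [Category.assoc, ← Category.assoc (t.μ.app (c.obj X)), h2]
    _ = t.map (t.η.app (c.obj X)) ≫ t.map (W.l.app X) ≫ W.l.app (t.obj X) ≫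
          c.δ.app (t.obj (t.obj X)) ≫ c.map (c.map (t.μ.app X)) := by
        rw [hnat]; simp
    _ = t.map (t.η.app (c.obj X)) ≫ t.map (W.l.app X) ≫ (t.map (c.δ.app (t.obj X)) ≫
          W.l.app (c.obj (t.obj X)) ≫ c.map (W.l.app (t.obj X))) ≫ c.map (c.map (t.μ.app X)) := by
        rw [h1]; simp
    _ = _ := by simp
end

section
/- Let (K, t, c, λ) be a weak mixed distributive law in Cat. Then the natural transformation Θ : tc ⟶ tc defined by Θ = (ε ▷ t ▷ c) ∘ (λ ▷ c) ∘ (t ◁ δ) is idempotent, i.e. Θ ∘ Θ = Θ. -/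
open CategoryTheory

universe v₁ u₁ v₂ u₂

variable {K : Type u₁} [Category.{v₁} K]

/-!
`Θ` factors as `(λ c) ∘ (t δ) : tc ⟶ ctc` followed by `ε`. Naturality of `λ`, coassociativity of
`δ` and the comultiplication axiom make this first map a coassociative coaction of `c` on `tc`,
and the composite of any coassociative coaction with `ε` is idempotent: by naturality of `ε`
and the counit law `δ ≫ ε c = 1`.
-/

theorem CategoryTheory.Comonad.idem_comp_counit_of_coassoc (c : Comonad K) {A : K}
    (a : A ⟶ c.obj A) (h : a ≫ c.map a = a ≫ c.δ.app A) :
    (a ≫ c.ε.app A) ≫ a ≫ c.ε.app A = a ≫ c.ε.app A :=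
  calc (a ≫ c.ε.app A) ≫ a ≫ c.ε.app A = (a ≫ c.map a) ≫ c.ε.app (c.obj A) ≫ c.ε.app A := by
        simp only [c.counit_naturality_assoc, Category.assoc]
    _ = a ≫ c.ε.app A := by
        rw [h, Category.assoc, c.left_counit_assoc]

namespace WeakMixedDistLaw

variable {t : Monad K} {c : Comonad K} (W : WeakMixedDistLaw t c)

def coaction (X : K) : t.obj (c.obj X) ⟶ c.obj (t.obj (c.obj X)) :=
  t.map (c.δ.app X) ≫ W.l.app (c.obj X)

theorem coaction_coassoc (X : K) :
    W.coaction X ≫ c.map (W.coaction X) = W.coaction X ≫ c.δ.app _ := by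
  have l_natural : t.map (c.map (c.δ.app X)) ≫ W.l.app (c.obj (c.obj X)) =
      W.l.app (c.obj X) ≫ c.map (t.map (c.δ.app X)) :=
    W.l.naturality (c.δ.app X)
  simp only [coaction, Functor.map_comp, Category.assoc]
  rw [← reassoc_of% l_natural, ← t.map_comp_assoc, c.coassoc, t.map_comp_assoc,
    W.comul_compat]

end WeakMixedDistLaw

/-- The canonical 2-cell Θ = (ε t c) ∘ (λ c) ∘ (t δ) : tc ⟶ tc of a weak mixed
distributive law is idempotent. -/
theorem canonical_idempotent (t : CategoryTheory.Monad K) (c : CategoryTheory.Comonad K)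
    (W : WeakMixedDistLaw t c) :
    ∀ X : K,
      (t.map (c.δ.app X) ≫ W.l.app (c.obj X) ≫ c.ε.app (t.obj (c.obj X))) ≫
        (t.map (c.δ.app X) ≫ W.l.app (c.obj X) ≫ c.ε.app (t.obj (c.obj X))) =
      t.map (c.δ.app X) ≫ W.l.app (c.obj X) ≫ c.ε.app (t.obj (c.obj X)) := by
  intro X
  simpa only [WeakMixedDistLaw.coaction, Category.assoc] using
    c.idem_comp_counit_of_coassoc (W.coaction X) (W.coaction_coassoc X)
end

section
/- Let (K, t, c, λ) be a weak mixed distributive law in Cat, and let the idempotent Θ = (ε t c) ∘ (λ c) ∘ (t δ) : tc ⟶ tc split as Θ = σ ∘ π with π : tc ⟶ a epi half and σ : a ⟶ tc mono half, π ∘ σ = id_a. Define α : ta ⟶ a by α = π ∘ (μ ▷ c) ∘ (t ◁ σ). Then α is an action of the monad t on a: α ∘ (η ▷ a) = id_a and α ∘ (μ ▷ a) = α ∘ (t ◁ α). -/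
/-!
The splitting exhibits `a` as a retract of the free `t`-algebra `tc` along the idempotent
`Θ = π ≫ σ`, and any such retract inherits the algebra structure `tσ ≫ μ ≫ π` as soon as
`t Θ ≫ μ ≫ π = μ ≫ π`. For `Θ` this follows from `t Θ ≫ μ ≫ Θ = μ ≫ Θ`: by the multiplicative
axiom of `λ`, `μ ≫ Θ` factors through `t (tδ ≫ λc)`, and by the comultiplicative axiom
`Θ ≫ tδ ≫ λc = tδ ≫ λc`.
-/


open CategoryTheory

universe v₁ u₁ v₂ u₂

variable {K : Type u₁} [Category.{v₁} K]

namespace CategoryTheory.Monad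

variable {C : Type*} [Category C] (T : Monad C) {A B : C}

def algebraOfRetract (σ : A ⟶ T.obj B) (π : T.obj B ⟶ A) (hσπ : σ ≫ π = 𝟙 A)
    (hμ : T.map (π ≫ σ) ≫ T.μ.app B ≫ π = T.μ.app B ≫ π) : T.Algebra where
  A := A
  a := T.map σ ≫ T.μ.app B ≫ π
  unit := by
    rw [← T.η.naturality_assoc, Functor.id_map, T.left_unit_assoc, hσπ]
  assoc := by
    calc T.μ.app A ≫ T.map σ ≫ T.μ.app B ≫ π
        = T.map (T.map σ) ≫ T.map (T.μ.app B) ≫ T.μ.app B ≫ π := by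
          rw [← T.μ.naturality_assoc, Functor.comp_map, ← reassoc_of% (T.assoc B)]
      _ = T.map (T.map σ ≫ T.μ.app B ≫ π) ≫ T.map σ ≫ T.μ.app B ≫ π := by
          simp only [Functor.map_comp, Category.assoc]
          rw [← T.map_comp_assoc π σ, hμ]

end CategoryTheory.Monad

namespace WeakMixedDistLaw

variable {t : Monad K} {c : Comonad K} (W : WeakMixedDistLaw t c)

def theta (X : K) : t.obj (c.obj X) ⟶ t.obj (c.obj X) :=
  t.map (c.δ.app X) ≫ W.l.app (c.obj X) ≫ c.ε.app (t.obj (c.obj X))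

theorem theta_comp_l (X : K) : W.theta X ≫ W.l.app X = W.l.app X := by
  have hε : c.ε.app (t.obj (c.obj X)) ≫ W.l.app X =
      c.map (W.l.app X) ≫ c.ε.app (c.obj (t.obj X)) :=
    (c.ε.naturality (W.l.app X)).symm
  rw [theta, Category.assoc, Category.assoc, hε, reassoc_of% W.comul_compat, Comonad.left_counit,
    Category.comp_id]

theorem theta_comp_map_δ (X : K) :
    W.theta X ≫ t.map (c.δ.app X) = t.map (c.δ.app X) ≫ W.theta (c.obj X) := by
  have hε : c.ε.app (t.obj (c.obj X)) ≫ t.map (c.δ.app X) =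
      c.map (t.map (c.δ.app X)) ≫ c.ε.app (t.obj (c.obj (c.obj X))) :=
    (c.ε.naturality (t.map (c.δ.app X))).symm
  have hl : W.l.app (c.obj X) ≫ c.map (t.map (c.δ.app X)) =
      t.map (c.map (c.δ.app X)) ≫ W.l.app (c.obj (c.obj X)) :=
    (W.l.naturality (c.δ.app X)).symm
  rw [theta, theta, Category.assoc, Category.assoc, hε, reassoc_of% hl, ← t.map_comp_assoc,
    c.coassoc, t.map_comp_assoc]

theorem μ_comp_theta (X : K) :
    t.μ.app (c.obj X) ≫ W.theta X = t.map (t.map (c.δ.app X) ≫ W.l.app (c.obj X)) ≫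
      W.l.app (t.obj (c.obj X)) ≫ c.ε.app (t.obj (t.obj (c.obj X))) ≫ t.μ.app (c.obj X) := by
  have hμ : t.μ.app (c.obj X) ≫ t.map (c.δ.app X) =
      t.map (t.map (c.δ.app X)) ≫ t.μ.app (c.obj (c.obj X)) :=
    (t.μ.naturality (c.δ.app X)).symm
  have hε : c.map (t.μ.app (c.obj X)) ≫ c.ε.app (t.obj (c.obj X)) =
      c.ε.app (t.obj (t.obj (c.obj X))) ≫ t.μ.app (c.obj X) :=
    c.ε.naturality (t.μ.app (c.obj X))
  rw [theta, reassoc_of% hμ, reassoc_of% (W.mul_compat (c.obj X)), hε, t.map_comp_assoc]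

theorem map_theta_comp_μ_comp_theta (X : K) :
    t.map (W.theta X) ≫ t.μ.app (c.obj X) ≫ W.theta X = t.μ.app (c.obj X) ≫ W.theta X := by
  have h : W.theta X ≫ t.map (c.δ.app X) ≫ W.l.app (c.obj X) =
      t.map (c.δ.app X) ≫ W.l.app (c.obj X) := by
    rw [reassoc_of% W.theta_comp_map_δ, theta_comp_l]
  rw [μ_comp_theta, ← t.map_comp_assoc, h]

end WeakMixedDistLaw

/-- Through a splitting of the canonical idempotent on tc, the 2-cell
α = π ∘ (μ c) ∘ (t σ) is an action of the monad t on a. -/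
theorem canonical_action (t : CategoryTheory.Monad K) (c : CategoryTheory.Comonad K)
    (W : WeakMixedDistLaw t c) (a : K ⥤ K) (π : (c.toFunctor ⋙ t.toFunctor) ⟶ a) (σ : a ⟶ (c.toFunctor ⋙ t.toFunctor))
    (hsec : σ ≫ π = 𝟙 a)
    (hsplit : ∀ X : K, π.app X ≫ σ.app X =
      t.map (c.δ.app X) ≫ W.l.app (c.obj X) ≫ c.ε.app (t.obj (c.obj X))) :
    (∀ X : K, t.η.app (a.obj X) ≫ (t.map (σ.app X) ≫ t.μ.app (c.obj X) ≫ π.app X) = 𝟙 (a.obj X)) ∧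
    (∀ X : K, t.μ.app (a.obj X) ≫ (t.map (σ.app X) ≫ t.μ.app (c.obj X) ≫ π.app X) =
      t.map (t.map (σ.app X) ≫ t.μ.app (c.obj X) ≫ π.app X) ≫
        (t.map (σ.app X) ≫ t.μ.app (c.obj X) ≫ π.app X)) := by
  have hσπ (X : K) : σ.app X ≫ π.app X = 𝟙 (a.obj X) := by
    simpa using NatTrans.congr_app hsec X
  have hπσ (X : K) : π.app X ≫ σ.app X = W.theta X := hsplit X
  have hθπ (X : K) : W.theta X ≫ π.app X = π.app X := by
    rw [← hπσ, Category.assoc, hσπ, Category.comp_id]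
  have hμ (X : K) : t.map (π.app X ≫ σ.app X) ≫ t.μ.app (c.obj X) ≫ π.app X =
      t.μ.app (c.obj X) ≫ π.app X := by
    rw [hπσ, ← hθπ, reassoc_of% (W.map_theta_comp_μ_comp_theta X)]
  exact ⟨fun X => (t.algebraOfRetract (σ.app X) (π.app X) (hσπ X) (hμ X)).unit,
    fun X => (t.algebraOfRetract (σ.app X) (π.app X) (hσπ X) (hμ X)).assoc⟩
end

section
/- Let (K, t, c, λ) be a weak mixed distributive law in Cat, with splitting (a, π, σ) of the canonical idempotent on tc, action α = π ∘ (μ c) ∘ (t σ) and coaction γ = (c π) ∘ (λ c) ∘ (t δ) ∘ σ. Then (a, α, γ) is a mixed algebra: γ ∘ α = (c ◁ α) ∘ (λ ▷ a) ∘ (t ◁ γ). -/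
/-!
Write `ρ = λc ∘ tδ : tc ⟶ ctc`, so that `γ = cπ ∘ ρ ∘ σ` and `Θ = εtc ∘ ρ`. The compatibility
of `λ` with `δ` makes `ρ` coassociative, so `Θ` is absorbed by `ρ` on either side; the
compatibility of `λ` with `μ` moves `μ` past `ρ`. Rewriting both sides of the mixed-algebra
equation with these facts (and `πσ = Θ`) reduces them to the same composite
`cπ ∘ cμc ∘ λtc ∘ tρ ∘ tσ`.
-/

open CategoryTheory

universe v₁ u₁ v₂ u₂

variable {K : Type u₁} [Category.{v₁} K]

namespace WeakMixedDistLaw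

variable {t : Monad K} {c : Comonad K} (W : WeakMixedDistLaw t c)

def coact (X : K) : t.obj (c.obj X) ⟶ c.obj (t.obj (c.obj X)) :=
  t.map (c.δ.app X) ≫ W.l.app (c.obj X)

def idem (X : K) : t.obj (c.obj X) ⟶ t.obj (c.obj X) :=
  W.coact X ≫ c.ε.app (t.obj (c.obj X))

lemma coact_comp_map_coact (X : K) :
    W.coact X ≫ c.map (W.coact X) = W.coact X ≫ c.δ.app (t.obj (c.obj X)) := by
  have hδ := W.l.naturality (c.δ.app X)
  simp only [Functor.comp_map, Functor.comp_obj] at hδ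
  simp only [coact, Functor.map_comp, Category.assoc]
  rw [reassoc_of% hδ.symm, ← t.map_comp_assoc, c.coassoc, t.map_comp_assoc,
    W.comul_compat (c.obj X)]

lemma idem_comp_coact (X : K) : W.idem X ≫ W.coact X = W.coact X := by
  have hε := c.ε.naturality (W.coact X)
  simp only [Functor.id_obj, Functor.id_map] at hε
  rw [idem, Category.assoc, ← hε, reassoc_of% W.coact_comp_map_coact, Comonad.left_counit,
    Category.comp_id]

lemma coact_comp_map_idem (X : K) : W.coact X ≫ c.map (W.idem X) = W.coact X := by
  rw [idem, c.map_comp, reassoc_of% W.coact_comp_map_coact, Comonad.right_counit,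
    Category.comp_id]

lemma map_coact_comp_l_comp_map_map_idem (X : K) :
    t.map (W.coact X) ≫ W.l.app (t.obj (c.obj X)) ≫ c.map (t.map (W.idem X)) =
      t.map (W.coact X) ≫ W.l.app (t.obj (c.obj X)) := by
  have hΘ := W.l.naturality (W.idem X)
  simp only [Functor.comp_map, Functor.comp_obj] at hΘ
  rw [← hΘ, ← t.map_comp_assoc, coact_comp_map_idem]

lemma mu_comp_coact (X : K) :
    t.μ.app (c.obj X) ≫ W.coact X =
      t.map (W.coact X) ≫ W.l.app (t.obj (c.obj X)) ≫ c.map (t.μ.app (c.obj X)) := by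
  have hμ := t.μ.naturality (c.δ.app X)
  simp only [Functor.comp_map, Functor.comp_obj] at hμ
  rw [coact, reassoc_of% hμ.symm, W.mul_compat (c.obj X)]
  simp only [Functor.map_comp, Category.assoc]

end WeakMixedDistLaw

theorem canonical_mixed_algebra_general (t : CategoryTheory.Monad K) (c : CategoryTheory.Comonad K)
    (W : WeakMixedDistLaw t c) (a : K ⥤ K) (π : (c.toFunctor ⋙ t.toFunctor) ⟶ a) (σ : a ⟶ (c.toFunctor ⋙ t.toFunctor))
    (hsplit : ∀ X : K, π.app X ≫ σ.app X =
      t.map (c.δ.app X) ≫ W.l.app (c.obj X) ≫ c.ε.app (t.obj (c.obj X))) :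
    ∀ X : K,
      (t.map (σ.app X) ≫ t.μ.app (c.obj X) ≫ π.app X) ≫
        (σ.app X ≫ t.map (c.δ.app X) ≫ W.l.app (c.obj X) ≫ c.map (π.app X)) =
      t.map (σ.app X ≫ t.map (c.δ.app X) ≫ W.l.app (c.obj X) ≫ c.map (π.app X)) ≫
        W.l.app (a.obj X) ≫
        c.map (t.map (σ.app X) ≫ t.μ.app (c.obj X) ≫ π.app X) := by
  intro X
  have hΘ : π.app X ≫ σ.app X = W.idem X := by
    rw [hsplit X, WeakMixedDistLaw.idem, WeakMixedDistLaw.coact, Category.assoc]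
  have hγ : σ.app X ≫ t.map (c.δ.app X) ≫ W.l.app (c.obj X) ≫ c.map (π.app X) =
      σ.app X ≫ W.coact X ≫ c.map (π.app X) := by
    rw [WeakMixedDistLaw.coact, Category.assoc]
  have hπ := W.l.naturality (π.app X)
  simp only [Functor.comp_map, Functor.comp_obj] at hπ
  rw [hγ]
  calc _ = t.map (σ.app X) ≫ t.μ.app (c.obj X) ≫ W.coact X ≫ c.map (π.app X) := by
        simp only [Category.assoc, reassoc_of% hΘ, reassoc_of% W.idem_comp_coact]
    _ = t.map (σ.app X) ≫ t.map (W.coact X) ≫ W.l.app (t.obj (c.obj X)) ≫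
          c.map (t.map (π.app X ≫ σ.app X)) ≫ c.map (t.μ.app (c.obj X)) ≫
          c.map (π.app X) := by
        rw [hΘ, reassoc_of% W.map_coact_comp_l_comp_map_map_idem, reassoc_of% W.mu_comp_coact]
    _ = _ := by simp only [Functor.map_comp, Category.assoc, reassoc_of% hπ]

/-- The canonical action and coaction on the splitting a of the canonical idempotent
make a into a mixed algebra: γ ∘ α = (c α) ∘ (λ a) ∘ (t γ). -/
theorem canonical_mixed_algebra (t : CategoryTheory.Monad K) (c : CategoryTheory.Comonad K)
    (W : WeakMixedDistLaw t c) (a : K ⥤ K) (π : (c.toFunctor ⋙ t.toFunctor) ⟶ a) (σ : a ⟶ (c.toFunctor ⋙ t.toFunctor))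
    (hsec : σ ≫ π = 𝟙 a)
    (hsplit : ∀ X : K, π.app X ≫ σ.app X =
      t.map (c.δ.app X) ≫ W.l.app (c.obj X) ≫ c.ε.app (t.obj (c.obj X))) :
    ∀ X : K,
      (t.map (σ.app X) ≫ t.μ.app (c.obj X) ≫ π.app X) ≫
        (σ.app X ≫ t.map (c.δ.app X) ≫ W.l.app (c.obj X) ≫ c.map (π.app X)) =
      t.map (σ.app X ≫ t.map (c.δ.app X) ≫ W.l.app (c.obj X) ≫ c.map (π.app X)) ≫
        W.l.app (a.obj X) ≫
        c.map (t.map (σ.app X) ≫ t.μ.app (c.obj X) ≫ π.app X) :=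
  canonical_mixed_algebra_general t c W a π σ hsplit
end

section
/- Let t be a monad and c a comonad on a category K and λ : tc ⟶ ct a natural transformation satisfying the multiplication and comultiplication compatibility axioms, the weak counit axiom (ε ▷ t) ∘ λ = μ ∘ (t ε t) ∘ (t λ) ∘ (t η c), and the strict unit axiom λ ∘ (η ▷ c) = c ◁ η. Then λ satisfies the strict counit axiom (ε ▷ t) ∘ λ = t ◁ ε as well, and hence λ is a strict mixed distributive law. (This is part of the lemma: conditions (vi) imply (i).) -/
open CategoryTheory

universe v₁ u₁ v₂ u₂

variable {K : Type u₁} [Category.{v₁} K]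

theorem unit_comp_distLaw_comp_counit {t : Monad K} {c : Comonad K}
    (l : (c.toFunctor ⋙ t.toFunctor) ⟶ (t.toFunctor ⋙ c.toFunctor)) {X : K}
    (hunit : t.η.app (c.obj X) ≫ l.app X = c.map (t.η.app X)) :
    t.η.app (c.obj X) ≫ l.app X ≫ c.ε.app (t.obj X) = c.ε.app X ≫ t.η.app X := by
  rw [reassoc_of% hunit]
  exact c.ε.naturality (t.η.app X)

theorem strict_unit_weak_counit_implies_strict_general (t : CategoryTheory.Monad K)
    (c : CategoryTheory.Comonad K)
    (l : (c.toFunctor ⋙ t.toFunctor) ⟶ (t.toFunctor ⋙ c.toFunctor))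
    (hweak_counit : ∀ X : K, l.app X ≫ c.ε.app (t.obj X) =
      t.map (t.η.app (c.obj X)) ≫ t.map (l.app X) ≫ t.map (c.ε.app (t.obj X)) ≫ t.μ.app X)
    (hunit : ∀ X : K, t.η.app (c.obj X) ≫ l.app X = c.map (t.η.app X)) :
    ∀ X : K, l.app X ≫ c.ε.app (t.obj X) = t.map (c.ε.app X) := by
  intro X
  calc l.app X ≫ c.ε.app (t.obj X)
      = t.map (t.η.app (c.obj X) ≫ l.app X ≫ c.ε.app (t.obj X)) ≫ t.μ.app X := by
        simpa only [Functor.map_comp, Category.assoc] using hweak_counit X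
    _ = t.map (c.ε.app X ≫ t.η.app X) ≫ t.μ.app X := by
        rw [unit_comp_distLaw_comp_counit l (hunit X)]
    _ = t.map (c.ε.app X) := by
        rw [Functor.map_comp, Category.assoc, Monad.right_unit, Category.comp_id]

/-- If λ satisfies the multiplication and comultiplication compatibilities, the weak counit
axiom and the strict unit axiom, then it satisfies the strict counit axiom, hence is a strict
mixed distributive law. -/
theorem strict_unit_weak_counit_implies_strict (t : CategoryTheory.Monad K)
    (c : CategoryTheory.Comonad K)
    (l : (c.toFunctor ⋙ t.toFunctor) ⟶ (t.toFunctor ⋙ c.toFunctor))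
    (hmul : ∀ X : K, t.μ.app (c.obj X) ≫ l.app X =
      t.map (l.app X) ≫ l.app (t.obj X) ≫ c.map (t.μ.app X))
    (hcomul : ∀ X : K, t.map (c.δ.app X) ≫ l.app (c.obj X) ≫ c.map (l.app X) =
      l.app X ≫ c.δ.app (t.obj X))
    (hweak_counit : ∀ X : K, l.app X ≫ c.ε.app (t.obj X) =
      t.map (t.η.app (c.obj X)) ≫ t.map (l.app X) ≫ t.map (c.ε.app (t.obj X)) ≫ t.μ.app X)
    (hunit : ∀ X : K, t.η.app (c.obj X) ≫ l.app X = c.map (t.η.app X)) :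
    ∀ X : K, l.app X ≫ c.ε.app (t.obj X) = t.map (c.ε.app X) :=
  strict_unit_weak_counit_implies_strict_general t c l hweak_counit hunit
end

section
/- Let t be a monad and c a comonad on a category K and λ : tc ⟶ ct satisfying the multiplication and comultiplication compatibility axioms, the weak unit axiom λ ∘ (η c) = (c ε t) ∘ (c λ) ∘ (c η c) ∘ δ, and the strict counit axiom (ε ▷ t) ∘ λ = t ◁ ε. Then λ satisfies the strict unit axiom λ ∘ (η ▷ c) = c ◁ η, and hence λ is a strict mixed distributive law. (Conditions (v) imply (i) in the lemma.) -/
/- The weak unit axiom writes `λ ∘ ηc` as `c(εt ∘ λ ∘ ηc) ∘ δ`. By the strict counit axiom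
and naturality of `η` the inner map is `η ∘ ε`, and `cε ∘ δ = 1` leaves `cη`. -/

open CategoryTheory

universe v₁ u₁ v₂ u₂

variable {K : Type u₁} [Category.{v₁} K]

theorem unit_comp_comp_counit_eq_of_strict_counit (t : CategoryTheory.Monad K) (c : Comonad K)
    (l : (c.toFunctor ⋙ t.toFunctor) ⟶ (t.toFunctor ⋙ c.toFunctor))
    (hcounit : ∀ X : K, l.app X ≫ c.ε.app (t.obj X) = t.map (c.ε.app X)) (X : K) :
    t.η.app (c.obj X) ≫ l.app X ≫ c.ε.app (t.obj X) = c.ε.app X ≫ t.η.app X := by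
  rw [hcounit]
  exact (t.η.naturality (c.ε.app X)).symm

theorem weak_unit_strict_counit_implies_strict_general (t : CategoryTheory.Monad K)
    (c : CategoryTheory.Comonad K)
    (l : (c.toFunctor ⋙ t.toFunctor) ⟶ (t.toFunctor ⋙ c.toFunctor))
    (hweak_unit : ∀ X : K, t.η.app (c.obj X) ≫ l.app X =
      c.δ.app X ≫ c.map (t.η.app (c.obj X)) ≫ c.map (l.app X) ≫ c.map (c.ε.app (t.obj X)))
    (hcounit : ∀ X : K, l.app X ≫ c.ε.app (t.obj X) = t.map (c.ε.app X)) :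
    ∀ X : K, t.η.app (c.obj X) ≫ l.app X = c.map (t.η.app X) := by
  intro X
  calc t.η.app (c.obj X) ≫ l.app X
      = c.δ.app X ≫ c.map (t.η.app (c.obj X) ≫ l.app X ≫ c.ε.app (t.obj X)) := by
        simp only [hweak_unit, Functor.map_comp]
    _ = c.δ.app X ≫ c.map (c.ε.app X) ≫ c.map (t.η.app X) := by
        rw [unit_comp_comp_counit_eq_of_strict_counit t c l hcounit, Functor.map_comp]
    _ = c.map (t.η.app X) := c.right_counit_assoc X _

/-- If λ satisfies the multiplication and comultiplication compatibilities, the weak unit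
axiom and the strict counit axiom, then it satisfies the strict unit axiom, hence is a strict
mixed distributive law. -/
theorem weak_unit_strict_counit_implies_strict (t : CategoryTheory.Monad K)
    (c : CategoryTheory.Comonad K)
    (l : (c.toFunctor ⋙ t.toFunctor) ⟶ (t.toFunctor ⋙ c.toFunctor))
    (hmul : ∀ X : K, t.μ.app (c.obj X) ≫ l.app X =
      t.map (l.app X) ≫ l.app (t.obj X) ≫ c.map (t.μ.app X))
    (hcomul : ∀ X : K, t.map (c.δ.app X) ≫ l.app (c.obj X) ≫ c.map (l.app X) =
      l.app X ≫ c.δ.app (t.obj X))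
    (hweak_unit : ∀ X : K, t.η.app (c.obj X) ≫ l.app X =
      c.δ.app X ≫ c.map (t.η.app (c.obj X)) ≫ c.map (l.app X) ≫ c.map (c.ε.app (t.obj X)))
    (hcounit : ∀ X : K, l.app X ≫ c.ε.app (t.obj X) = t.map (c.ε.app X)) :
    ∀ X : K, t.η.app (c.obj X) ≫ l.app X = c.map (t.η.app X) :=
  weak_unit_strict_counit_implies_strict_general t c l hweak_unit hcounit
end

section
/- Consider a commutative square of functors u ∘ v̄ = v ∘ ū (with v̄ : P ⟶ L, ū : P ⟶ M, u : L ⟶ K, v : M ⟶ K) together with adjunctions f ⊣ u, f̄ ⊣ ū, v ⊣ g, v̄ ⊣ ḡ. Let π : f v ⟶ v̄ f̄ be the mate of the identity 2-cell v ū = u v̄ under f ⊣ u and f̄ ⊣ ū, and let σ : ū ḡ ⟶ g u be the mate of the identity under v ⊣ g and v̄ ⊣ ḡ. Then there is a bijection between natural transformations π̌ : v̄ f̄ ⟶ f v with π ∘ π̌ = 1 and natural transformations σ̂ : g u ⟶ ū ḡ with σ̂ ∘ σ = 1. -/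
open CategoryTheory

universe v₁ v₂ v₃ v₄ u₁ u₂ u₃ u₄

/-! Composing the adjunctions gives `f v ⊣ g u` and `v̄ f̄ ⊣ ū ḡ`, and the mate of `π` under
these composite adjunctions is `σ` (mates of mates are conjugates). Conjugation is a
contravariant, composition-preserving bijection of 2-cells, so it carries sections of `π`
exactly to retractions of `σ`. -/

namespace CategoryTheory

variable {C : Type u₁} {D : Type u₂} [Category.{v₁} C] [Category.{v₂} D]
  {L₁ L₂ : C ⥤ D} {R₁ R₂ : D ⥤ C} (adj₁ : L₁ ⊣ R₁) (adj₂ : L₂ ⊣ R₂)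

theorem conjugateEquiv_comp_eq_id_iff (α : L₂ ⟶ L₁) (β : L₁ ⟶ L₂) :
    conjugateEquiv adj₁ adj₂ α ≫ conjugateEquiv adj₂ adj₁ β = 𝟙 R₁ ↔ β ≫ α = 𝟙 L₁ := by
  rw [conjugateEquiv_comp, ← conjugateEquiv_id adj₁, (conjugateEquiv adj₁ adj₁).apply_eq_iff_eq]

def sectionsEquivRetractionsConjugate (α : L₂ ⟶ L₁) :
    {s : L₁ ⟶ L₂ // s ≫ α = 𝟙 L₁} ≃
      {r : R₂ ⟶ R₁ // conjugateEquiv adj₁ adj₂ α ≫ r = 𝟙 R₁} :=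
  (conjugateEquiv adj₂ adj₁).subtypeEquiv fun s =>
    (conjugateEquiv_comp_eq_id_iff adj₁ adj₂ α s).symm

end CategoryTheory

/-- For a commutative square u v̄ = v ū with adjunctions f ⊣ u, f̄ ⊣ ū, v ⊣ g, v̄ ⊣ ḡ, there
is a bijection between sections π̌ of the mate π : fv ⟶ v̄ f̄ of the identity 2-cell and
retractions σ̂ of the mate σ : ū ḡ ⟶ g u of the identity 2-cell. -/
theorem section_of_pi_equiv_retraction_of_sigma
    {P : Type u₁} {L : Type u₂} {M : Type u₃} {K : Type u₄}
    [Category.{v₁} P] [Category.{v₂} L] [Category.{v₃} M] [Category.{v₄} K]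
    (vbar : P ⥤ L) (ubar : P ⥤ M) (u : L ⥤ K) (v : M ⥤ K)
    (e : vbar ⋙ u ≅ ubar ⋙ v)
    (f : K ⥤ L) (adjf : f ⊣ u)
    (fbar : M ⥤ P) (adjfbar : fbar ⊣ ubar)
    (g : K ⥤ M) (adjv : v ⊣ g)
    (gbar : L ⥤ P) (adjvbar : vbar ⊣ gbar) :
    Nonempty
      ({πc : (fbar ⋙ vbar) ⟶ (v ⋙ f) //
          πc ≫ (mateEquiv adjfbar adjf).symm e.inv = 𝟙 (fbar ⋙ vbar)} ≃
       {σh : (u ⋙ g) ⟶ (gbar ⋙ ubar) //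
          (mateEquiv adjvbar adjv) e.inv ≫ σh = 𝟙 (gbar ⋙ ubar)}) := by
  have conjugate_pi : conjugateEquiv (adjfbar.comp adjvbar) (adjv.comp adjf)
      ((mateEquiv adjfbar adjf).symm e.inv) = mateEquiv adjvbar adjv e.inv :=
    (iterated_mateEquiv_conjugateEquiv adjfbar adjf adjv adjvbar _).symm.trans
      (congrArg (fun γ => (mateEquiv adjvbar adjv γ).natTrans)
        ((mateEquiv adjfbar adjf).apply_symm_apply e.inv))
  exact ⟨conjugate_pi ▸
    sectionsEquivRetractionsConjugate (adjfbar.comp adjvbar) (adjv.comp adjf) _⟩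
end

section
/- Given a commutative square of categories and functors u v̄ = v ū with adjunctions f ⊣ u, f̄ ⊣ ū, v ⊣ g, v̄ ⊣ ḡ, a section π̌ of the mate π : fv ⟶ v̄ f̄ (so π π̌ = 1), and defining λ : u f v g ⟶ v g u f as the composite (v σ f) ∘ (v ū θ) ∘ (identification u v̄ = v ū applied to f̄ g) ∘ (u π g), where θ : f̄ g ⟶ ḡ f is the mate of π̌ under v ⊣ g and v̄ ⊣ ḡ, and σ : ū ḡ ⟶ g u is the mate of the identity: then λ satisfies the multiplication compatibility axiom of a weak mixed distributive law for the monad t = u f and comonad c = v g, namely λ ∘ (μ ▷ c) = (c ◁ μ) ∘ (λ ▷ t) ∘ (t ◁ λ), where μ = u ε f is the monad multiplication. -/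
open CategoryTheory

universe v₁ v₂ v₃ v₄ u₁ u₂ u₃ u₄

/-!
Write `λ = u α ≫ β f` with `α = π g ≫ v̄ θ : f c ⟶ D f` and `β = e ḡ ≫ v σ : u D ⟶ c u`,
where `c = v g` and `D = v̄ ḡ`. For any such pair, naturality of `ε` and `β` reduces the
multiplication axiom to the factorization `ε D = f β ≫ α u ≫ D ε` of the counit. Transposed
along `f ⊣ u`, and using `η v ≫ u π = v η̄ ≫ e⁻¹` (π is the mate of `e⁻¹`), this factorization
becomes `e ≫ v (σ ≫ σ̂) ≫ e⁻¹ = 1`, where `σ̂`, the conjugate of `π̌`, is the mate of `θ` along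
`f ⊣ u` and `f̄ ⊣ ū`; so it holds because `σ σ̂ = 1`.
-/

namespace CategoryTheory

theorem Adjunction.counit_app_eq_map_comp_iff {C : Type u₁} {D : Type u₂} [Category.{v₁} C]
    [Category.{v₂} D] {F : C ⥤ D} {G : D ⥤ C} (adj : F ⊣ G) {Y : C} {Z : D}
    (b : G.obj Z ⟶ Y) (k : F.obj Y ⟶ Z) :
    adj.counit.app Z = F.map b ≫ k ↔ b ≫ adj.unit.app Y ≫ G.map k = 𝟙 (G.obj Z) := by
  rw [← (adj.homEquiv _ _).apply_eq_iff_eq, Adjunction.homEquiv_naturality_left,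
    Adjunction.homEquiv_unit, Adjunction.homEquiv_unit, Adjunction.right_triangle_components,
    eq_comm]

theorem Adjunction.mul_compat_of_counit_eq {K : Type u₁} {L : Type u₂} [Category.{v₁} K]
    [Category.{v₂} L] {f : K ⥤ L} {u : L ⥤ K} (adj : f ⊣ u) {c : K ⥤ K} {D : L ⥤ L}
    (α : ∀ X, f.obj (c.obj X) ⟶ D.obj (f.obj X)) (β : D ⋙ u ⟶ u ⋙ c)
    (h : ∀ A, adj.counit.app (D.obj A) =
      f.map (β.app A) ≫ α (u.obj A) ≫ D.map (adj.counit.app A)) (X : K) :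
    u.map (adj.counit.app (f.obj (c.obj X))) ≫ u.map (α X) ≫ β.app (f.obj X) =
      u.map (f.map (u.map (α X) ≫ β.app (f.obj X))) ≫
        (u.map (α (u.obj (f.obj X))) ≫ β.app (f.obj (u.obj (f.obj X)))) ≫
        c.map (u.map (adj.counit.app (f.obj X))) := by
  have hβ : u.map (D.map (adj.counit.app (f.obj X))) ≫ β.app (f.obj X) =
      β.app (f.obj (u.obj (f.obj X))) ≫ c.map (u.map (adj.counit.app (f.obj X))) :=
    β.naturality _
  calc
    _ = u.map (f.map (u.map (α X))) ≫ u.map (adj.counit.app (D.obj (f.obj X))) ≫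
          β.app (f.obj X) := by
      rw [← Functor.map_comp_assoc, ← Functor.map_comp_assoc, adj.counit_naturality (α X)]
    _ = _ := by
      rw [h]
      simp only [Functor.map_comp, Category.assoc, hβ]

theorem counit_app_eq_of_comp_mateEquiv_eq_id {P : Type u₁} {L : Type u₂} {M : Type u₃}
    {K : Type u₄} [Category.{v₁} P] [Category.{v₂} L] [Category.{v₃} M] [Category.{v₄} K]
    {vbar : P ⥤ L} {ubar : P ⥤ M} {u : L ⥤ K} {v : M ⥤ K} (e : vbar ⋙ u ≅ ubar ⋙ v)
    {f : K ⥤ L} (adjf : f ⊣ u) {fbar : M ⥤ P} (adjfbar : fbar ⊣ ubar) {g : K ⥤ M}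
    {gbar : L ⥤ P} (σ : gbar ⋙ ubar ⟶ u ⋙ g) (θ : TwoSquare g f fbar gbar)
    (hσ : σ ≫ (mateEquiv adjf adjfbar θ).natTrans = 𝟙 _) (A : L) :
    adjf.counit.app (vbar.obj (gbar.obj A)) =
      f.map (e.hom.app (gbar.obj A) ≫ v.map (σ.app A)) ≫
        ((mateEquiv adjfbar adjf).symm e.inv).app (g.obj (u.obj A)) ≫
        vbar.map (θ.app (u.obj A) ≫ gbar.map (adjf.counit.app A)) := by
  have hsection : σ.app A ≫ adjfbar.unit.app (g.obj (u.obj A)) ≫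
      ubar.map (θ.app (u.obj A) ≫ gbar.map (adjf.counit.app A)) = 𝟙 (ubar.obj (gbar.obj A)) := by
    simpa using congr_app hσ A
  have hπ := unit_mateEquiv_symm adjfbar adjf e.inv (g.obj (u.obj A))
  have he := e.inv.naturality (θ.app (u.obj A) ≫ gbar.map (adjf.counit.app A))
  dsimp only [Functor.comp_obj, Functor.comp_map, Functor.id_obj] at hπ he
  rw [Adjunction.counit_app_eq_map_comp_iff, Functor.map_comp, Category.assoc]
  dsimp only [Functor.comp_obj]
  rw [reassoc_of% hπ.symm, ← he, ← v.map_comp_assoc, ← v.map_comp_assoc, Category.assoc, hsection,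
    v.map_id, Category.id_comp]
  exact e.hom_inv_id_app _

end CategoryTheory

theorem induced_lambda_mul_compat_general
    {P : Type u₁} {L : Type u₂} {M : Type u₃} {K : Type u₄}
    [Category.{v₁} P] [Category.{v₂} L] [Category.{v₃} M] [Category.{v₄} K]
    (vbar : P ⥤ L) (ubar : P ⥤ M) (u : L ⥤ K) (v : M ⥤ K)
    (e : vbar ⋙ u ≅ ubar ⋙ v)
    (f : K ⥤ L) (adjf : f ⊣ u)
    (fbar : M ⥤ P) (adjfbar : fbar ⊣ ubar)
    (g : K ⥤ M) (adjv : v ⊣ g)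
    (gbar : L ⥤ P) (adjvbar : vbar ⊣ gbar)
    (πc : (fbar ⋙ vbar) ⟶ (v ⋙ f))
    (hσ : (mateEquiv adjvbar adjv) e.inv ≫
      conjugateEquiv (adjv.comp adjf) (adjfbar.comp adjvbar) πc = 𝟙 (gbar ⋙ ubar)) :
    -- the mates π, σ and θ
    let π : (v ⋙ f) ⟶ (fbar ⋙ vbar) := (mateEquiv adjfbar adjf).symm e.inv
    let σ : (gbar ⋙ ubar) ⟶ (u ⋙ g) := (mateEquiv adjvbar adjv) e.inv
    let θ : (g ⋙ fbar) ⟶ (f ⋙ gbar) := (mateEquiv adjv adjvbar) πc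
    -- the induced 2-cell λ : u f v g ⟶ v g u f, componentwise
    let lam : ∀ X : K, u.obj (f.obj (v.obj (g.obj X))) ⟶ v.obj (g.obj (u.obj (f.obj X))) :=
      fun X => u.map (π.app (g.obj X)) ≫ e.hom.app (fbar.obj (g.obj X)) ≫
        v.map (ubar.map (θ.app X)) ≫ v.map (σ.app (f.obj X))
    -- multiplication compatibility: λ ∘ (μ c) = (c μ) ∘ (λ t) ∘ (t λ), with μ = u ε f
    ∀ X : K,
      u.map (adjf.counit.app (f.obj (v.obj (g.obj X)))) ≫ lam X =
      u.map (f.map (lam X)) ≫ lam (u.obj (f.obj X)) ≫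
        v.map (g.map (u.map (adjf.counit.app (f.obj X)))) := by
  intro π σ θ lam X
  let α : ∀ Y, f.obj (v.obj (g.obj Y)) ⟶ vbar.obj (gbar.obj (f.obj Y)) :=
    fun Y => π.app (g.obj Y) ≫ vbar.map (θ.app Y)
  let β : (gbar ⋙ vbar) ⋙ u ⟶ u ⋙ g ⋙ v :=
    Functor.whiskerLeft gbar e.hom ≫ Functor.whiskerRight σ v
  have hlam : ∀ Y, lam Y = u.map (α Y) ≫ β.app (f.obj Y) := fun Y => by
    have he := e.hom.naturality (θ.app Y)
    simp only [Functor.comp_map] at he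
    simp only [lam, α, β, NatTrans.comp_app, Functor.whiskerLeft_app, Functor.whiskerRight_app,
      Functor.map_comp, Category.assoc, reassoc_of% he]
  rw [← iterated_mateEquiv_conjugateEquiv adjv adjvbar adjfbar adjf πc] at hσ
  have hcounit : ∀ A, adjf.counit.app (vbar.obj (gbar.obj A)) =
      f.map (β.app A) ≫ α (u.obj A) ≫ vbar.map (gbar.map (adjf.counit.app A)) := fun A => by
    rw [Category.assoc, ← vbar.map_comp]
    exact counit_app_eq_of_comp_mateEquiv_eq_id e adjf adjfbar σ θ hσ A
  simp only [hlam]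
  exact adjf.mul_compat_of_counit_eq (c := g ⋙ v) (D := gbar ⋙ vbar) α β hcounit X

/-- Given a commutative square u v̄ = v ū with the four adjunctions and a section π̌ of the
mate π : fv ⟶ v̄ f̄, the 2-cell λ = (v σ f) ∘ (v ū θ) ∘ (identification) ∘ (u π g) satisfies
the multiplication compatibility axiom of a weak mixed distributive law for the monad
t = u f and the comonad c = v g. -/
theorem induced_lambda_mul_compat
    {P : Type u₁} {L : Type u₂} {M : Type u₃} {K : Type u₄}
    [Category.{v₁} P] [Category.{v₂} L] [Category.{v₃} M] [Category.{v₄} K]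
    (vbar : P ⥤ L) (ubar : P ⥤ M) (u : L ⥤ K) (v : M ⥤ K)
    (e : vbar ⋙ u ≅ ubar ⋙ v)
    (f : K ⥤ L) (adjf : f ⊣ u)
    (fbar : M ⥤ P) (adjfbar : fbar ⊣ ubar)
    (g : K ⥤ M) (adjv : v ⊣ g)
    (gbar : L ⥤ P) (adjvbar : vbar ⊣ gbar)
    (πc : (fbar ⋙ vbar) ⟶ (v ⋙ f))
    (hπ : πc ≫ (mateEquiv adjfbar adjf).symm e.inv = 𝟙 (fbar ⋙ vbar))
    (hσ : (mateEquiv adjvbar adjv) e.inv ≫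
      conjugateEquiv (adjv.comp adjf) (adjfbar.comp adjvbar) πc = 𝟙 (gbar ⋙ ubar)) :
    -- the mates π, σ and θ
    let π : (v ⋙ f) ⟶ (fbar ⋙ vbar) := (mateEquiv adjfbar adjf).symm e.inv
    let σ : (gbar ⋙ ubar) ⟶ (u ⋙ g) := (mateEquiv adjvbar adjv) e.inv
    let θ : (g ⋙ fbar) ⟶ (f ⋙ gbar) := (mateEquiv adjv adjvbar) πc
    -- the induced 2-cell λ : u f v g ⟶ v g u f, componentwise
    let lam : ∀ X : K, u.obj (f.obj (v.obj (g.obj X))) ⟶ v.obj (g.obj (u.obj (f.obj X))) :=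
      fun X => u.map (π.app (g.obj X)) ≫ e.hom.app (fbar.obj (g.obj X)) ≫
        v.map (ubar.map (θ.app X)) ≫ v.map (σ.app (f.obj X))
    -- multiplication compatibility: λ ∘ (μ c) = (c μ) ∘ (λ t) ∘ (t λ), with μ = u ε f
    ∀ X : K,
      u.map (adjf.counit.app (f.obj (v.obj (g.obj X)))) ≫ lam X =
      u.map (f.map (lam X)) ≫ lam (u.obj (f.obj X)) ≫
        v.map (g.map (u.map (adjf.counit.app (f.obj X)))) :=
  induced_lambda_mul_compat_general vbar ubar u v e f adjf fbar adjfbar g adjv gbar adjvbar πc hσ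
end

section
/- Let (K, t, c, λ) and (K', t', c', λ') be weak mixed distributive laws in Cat, x : K ⟶ K' a functor, (x, ξ) a monad morphism (K,t) ⟶ (K',t') and (x, ζ) a comonad morphism (K,c) ⟶ (K',c'). Then the two compatibility conditions are equivalent: (i) (c' ◁ x ◁ ε ▷ t) ∘ (c' ◁ x ◁ λ) ∘ (c' ◁ ξ ▷ c) ∘ (λ' ▷ x ▷ c) ∘ (t' ◁ ζ ▷ c) ∘ (t' ◁ x ◁ δ) = (ζ ▷ t) ∘ (x ◁ λ) ∘ (ξ ▷ c); (ii) (c' ◁ x ◁ μ) ∘ (c' ◁ ξ ▷ t) ∘ (λ' ▷ x ▷ t) ∘ (t' ◁ ζ ▷ t) ∘ (t' ◁ x ◁ λ) ∘ (t' ◁ x ◁ η ▷ c) = (ζ ▷ t) ∘ (x ◁ λ) ∘ (ξ ▷ c). -/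
/-!
Write `e := η_c ≫ λ ≫ ε_t : c ⟶ t`. The weak unit axiom says `η_c ≫ λ = δ ≫ c e` and the weak
counit axiom says `λ ≫ ε_t = t e ≫ μ`. The pasted 2-cell `t'ζ ≫ λ'x ≫ c'ξ : t'xc ⟶ c'xt` is
natural, so it turns `t'x c e` on its left into `c'x t e` on its right. Hence the left-hand sides
of the two conditions are equal, and the conditions are equivalent.
-/

open CategoryTheory

universe v₁ u₁ v₂ u₂

variable {K : Type u₁} [Category.{v₁} K]

namespace WeakMixedDistLaw

variable {t : Monad K} {c : Comonad K} (W : WeakMixedDistLaw t c)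

lemma unit_comp_l (X : K) : t.η.app (c.obj X) ≫ W.l.app X =
    c.δ.app X ≫ c.map (t.η.app (c.obj X) ≫ W.l.app X ≫ c.ε.app (t.obj X)) := by
  simpa only [Functor.map_comp] using W.weak_unit X

lemma l_comp_counit (X : K) : W.l.app X ≫ c.ε.app (t.obj X) =
    t.map (t.η.app (c.obj X) ≫ W.l.app X ≫ c.ε.app (t.obj X)) ≫ t.μ.app X := by
  simpa only [Functor.map_comp, Category.assoc] using W.weak_counit X

end WeakMixedDistLaw

section

variable {K' : Type u₂} [Category.{v₂} K'] {T C : K ⥤ K} {T' C' : K' ⥤ K'} {x : K ⥤ K'}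

lemma pasting_naturality {ζ : C ⋙ x ⟶ x ⋙ C'} {l' : C' ⋙ T' ⟶ T' ⋙ C'}
    {ξ : x ⋙ T' ⟶ T ⋙ x} {Y Z : K} (f : Y ⟶ Z) :
    T'.map (x.map (C.map f)) ≫ T'.map (ζ.app Z) ≫ l'.app (x.obj Z) ≫ C'.map (ξ.app Z) =
      T'.map (ζ.app Y) ≫ l'.app (x.obj Y) ≫ C'.map (ξ.app Y) ≫ C'.map (x.map (T.map f)) := by
  have hζ := ζ.naturality f
  have hl := l'.naturality (x.map f)
  have hξ := ξ.naturality f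
  dsimp at hζ hl hξ
  rw [← T'.map_comp_assoc, hζ, T'.map_comp_assoc, reassoc_of% hl, ← C'.map_comp, hξ,
    C'.map_comp]

end

theorem wdl_morphism_conditions_equiv_general
    {K' : Type u₂} [Category.{v₂} K']
    (t : CategoryTheory.Monad K) (c : CategoryTheory.Comonad K)
    (t' : CategoryTheory.Monad K') (c' : CategoryTheory.Comonad K')
    (W : WeakMixedDistLaw t c) (W' : WeakMixedDistLaw t' c')
    (x : K ⥤ K')
    (ξ : (x ⋙ t'.toFunctor) ⟶ (t.toFunctor ⋙ x))
    (ζ : (c.toFunctor ⋙ x) ⟶ (x ⋙ c'.toFunctor)) :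
    (∀ X : K,
      t'.map (x.map (c.δ.app X)) ≫ t'.map (ζ.app (c.obj X)) ≫ W'.l.app (x.obj (c.obj X)) ≫
        c'.map (ξ.app (c.obj X)) ≫ c'.map (x.map (W.l.app X)) ≫
        c'.map (x.map (c.ε.app (t.obj X))) =
      ξ.app (c.obj X) ≫ x.map (W.l.app X) ≫ ζ.app (t.obj X)) ↔
    (∀ X : K,
      t'.map (x.map (t.η.app (c.obj X))) ≫ t'.map (x.map (W.l.app X)) ≫
        t'.map (ζ.app (t.obj X)) ≫ W'.l.app (x.obj (t.obj X)) ≫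
        c'.map (ξ.app (t.obj X)) ≫ c'.map (x.map (t.μ.app X)) =
      ξ.app (c.obj X) ≫ x.map (W.l.app X) ≫ ζ.app (t.obj X)) := by
  have lhs_eq : ∀ X : K,
      t'.map (x.map (t.η.app (c.obj X))) ≫ t'.map (x.map (W.l.app X)) ≫
        t'.map (ζ.app (t.obj X)) ≫ W'.l.app (x.obj (t.obj X)) ≫
        c'.map (ξ.app (t.obj X)) ≫ c'.map (x.map (t.μ.app X)) =
      t'.map (x.map (c.δ.app X)) ≫ t'.map (ζ.app (c.obj X)) ≫ W'.l.app (x.obj (c.obj X)) ≫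
        c'.map (ξ.app (c.obj X)) ≫ c'.map (x.map (W.l.app X)) ≫
        c'.map (x.map (c.ε.app (t.obj X))) := by
    intro X
    rw [← t'.map_comp_assoc, ← x.map_comp, W.unit_comp_l, x.map_comp, t'.map_comp_assoc,
      reassoc_of% (pasting_naturality (l' := W'.l) (ξ := ξ) (ζ := ζ)
        (t.η.app (c.obj X) ≫ W.l.app X ≫ c.ε.app (t.obj X))),
      ← c'.map_comp, ← x.map_comp, ← W.l_comp_counit, x.map_comp, c'.map_comp]
  exact ⟨fun h X => (lhs_eq X).trans (h X), fun h X => (lhs_eq X).symm.trans (h X)⟩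

/-- For a monad morphism (x,ξ) and a comonad morphism (x,ζ) between weak mixed distributive
laws, the two compatibility conditions (ξ is a 2-cell in Cmd^π, resp. ζ is a 2-cell in Mnd^ι)
are equivalent. -/
theorem wdl_morphism_conditions_equiv
    {K' : Type u₂} [Category.{v₂} K']
    (t : CategoryTheory.Monad K) (c : CategoryTheory.Comonad K)
    (t' : CategoryTheory.Monad K') (c' : CategoryTheory.Comonad K')
    (W : WeakMixedDistLaw t c) (W' : WeakMixedDistLaw t' c')
    (x : K ⥤ K')
    (ξ : (x ⋙ t'.toFunctor) ⟶ (t.toFunctor ⋙ x))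
    (hξ_unit : ∀ X : K, t'.η.app (x.obj X) ≫ ξ.app X = x.map (t.η.app X))
    (hξ_mul : ∀ X : K, t'.μ.app (x.obj X) ≫ ξ.app X =
      t'.map (ξ.app X) ≫ ξ.app (t.obj X) ≫ x.map (t.μ.app X))
    (ζ : (c.toFunctor ⋙ x) ⟶ (x ⋙ c'.toFunctor))
    (hζ_counit : ∀ X : K, ζ.app X ≫ c'.ε.app (x.obj X) = x.map (c.ε.app X))
    (hζ_comul : ∀ X : K, ζ.app X ≫ c'.δ.app (x.obj X) =
      x.map (c.δ.app X) ≫ ζ.app (c.obj X) ≫ c'.map (ζ.app X)) :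
    (∀ X : K,
      t'.map (x.map (c.δ.app X)) ≫ t'.map (ζ.app (c.obj X)) ≫ W'.l.app (x.obj (c.obj X)) ≫
        c'.map (ξ.app (c.obj X)) ≫ c'.map (x.map (W.l.app X)) ≫
        c'.map (x.map (c.ε.app (t.obj X))) =
      ξ.app (c.obj X) ≫ x.map (W.l.app X) ≫ ζ.app (t.obj X)) ↔
    (∀ X : K,
      t'.map (x.map (t.η.app (c.obj X))) ≫ t'.map (x.map (W.l.app X)) ≫
        t'.map (ζ.app (t.obj X)) ≫ W'.l.app (x.obj (t.obj X)) ≫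
        c'.map (ξ.app (t.obj X)) ≫ c'.map (x.map (t.μ.app X)) =
      ξ.app (c.obj X) ≫ x.map (W.l.app X) ≫ ζ.app (t.obj X)) :=
  wdl_morphism_conditions_equiv_general t c t' c' W W' x ξ ζ
end

section
/- Let (K, t, c, λ) be a weak mixed distributive law in Cat. Then the data ((K,t),(c,λ)) satisfy: (c,λ) is a 1-cell (K,t) ⟶ (K,t) in Mnd^ι(Cat) (i.e. λ ∘ (μ c) = (c μ) ∘ (λ t) ∘ (t λ)), ε : (c,λ) ⟶ 1_{(K,t)} is a 2-cell in Mnd^ι(Cat) (i.e. (ε t) ∘ λ = μ ∘ (t ε t) ∘ (t λ) ∘ (t η c)), and moreover δ : (c,λ) ⟶ (c,λ)(c,λ) is a 2-cell in Mnd^ι(Cat) with respect to the composite 1-cell (cc, (c λ)(λ c)), i.e. (δ t) ∘ λ = (c c μ) ∘ (c λ t) ∘ (λ c t) ∘ (t δ t) ∘ (t λ) ∘ (t η c). -/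
open CategoryTheory

universe v₁ u₁ v₂ u₂

variable {K : Type u₁} [Category.{v₁} K]

/-- For a weak mixed distributive law (K,t,c,λ): (c,λ) is a 1-cell in Mnd^ι, ε is a 2-cell
(c,λ) ⟶ 1 in Mnd^ι, and δ is automatically a 2-cell (c,λ) ⟶ (c,λ)(c,λ) in Mnd^ι. -/
theorem comonad_in_Mnd_iota (t : CategoryTheory.Monad K) (c : CategoryTheory.Comonad K)
    (W : WeakMixedDistLaw t c) :
    (∀ X : K, t.μ.app (c.obj X) ≫ W.l.app X =
      t.map (W.l.app X) ≫ W.l.app (t.obj X) ≫ c.map (t.μ.app X)) ∧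
    (∀ X : K, W.l.app X ≫ c.ε.app (t.obj X) =
      t.map (t.η.app (c.obj X)) ≫ t.map (W.l.app X) ≫ t.map (c.ε.app (t.obj X)) ≫ t.μ.app X) ∧
    (∀ X : K, W.l.app X ≫ c.δ.app (t.obj X) =
      t.map (t.η.app (c.obj X)) ≫ t.map (W.l.app X) ≫ t.map (c.δ.app (t.obj X)) ≫
        W.l.app (c.obj (t.obj X)) ≫ c.map (W.l.app (t.obj X)) ≫ c.map (c.map (t.μ.app X))) := by
  refine ⟨W.mul_compat, W.weak_counit, fun X => ?_⟩
  have h1 := W.comul_compat (t.obj X)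
  have h2 := W.mul_compat X
  have h3 := c.δ.naturality (t.μ.app X)
  calc W.l.app X ≫ c.δ.app (t.obj X)
      = (t.map (t.η.app (c.obj X)) ≫ t.μ.app (c.obj X)) ≫ W.l.app X ≫ c.δ.app (t.obj X) := by
        simp
    _ = t.map (t.η.app (c.obj X)) ≫ (t.map (W.l.app X) ≫ W.l.app (t.obj X) ≫
          c.map (t.μ.app X)) ≫ c.δ.app (t.obj X) := by
        rw [Category.assoc, reassoc_of% h2]
        simp only [Category.assoc]
    _ = t.map (t.η.app (c.obj X)) ≫ t.map (W.l.app X) ≫ W.l.app (t.obj X) ≫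
          c.δ.app (t.obj (t.obj X)) ≫ c.map (c.map (t.μ.app X)) := by
        simp only [Category.assoc, reassoc_of% h3]
        simp
    _ = t.map (t.η.app (c.obj X)) ≫ t.map (W.l.app X) ≫ (t.map (c.δ.app (t.obj X)) ≫
          W.l.app (c.obj (t.obj X)) ≫ c.map (W.l.app (t.obj X))) ≫ c.map (c.map (t.μ.app X)) := by
        rw [h1]
        simp only [Category.assoc]
    _ = _ := by simp
end
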